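/- arXiv:2603.10530 — 2 statements merged into one kernel-verified Lean document; each statement's English description precedes it below -/
import Mathlib

section
/- Let u be a smooth strictly plurisubharmonic function on an open set Ω ⊆ ℂ^n satisfying det(u_{ij̄}) = e^{(n+1)u} on Ω, and set A = (u_{ij̄}). Then, as an identity of n×n matrix-valued functions on Ω, u^{ij̄} ∂_i∂_{j̄} A = u^{ij̄} (∂_i A)·A⁻¹·(∂_{j̄} A) + (n+1)A (summation over i, j). -/
open Complex Matrix
open scoped ComplexOrder

noncomputable section

/-- Wirtinger derivative `∂/∂z_j` of a complex-valued function on `ℂⁿ`. -/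
def wdz {n : ℕ} (f : (Fin n → ℂ) → ℂ) (j : Fin n) (z : Fin n → ℂ) : ℂ :=
  (fderiv ℝ f z (Pi.single j 1) - Complex.I * fderiv ℝ f z (Pi.single j Complex.I)) / 2

/-- Wirtinger derivative `∂/∂z̄_j` of a complex-valued function on `ℂⁿ`. -/
def wdzbar {n : ℕ} (f : (Fin n → ℂ) → ℂ) (j : Fin n) (z : Fin n → ℂ) : ℂ :=
  (fderiv ℝ f z (Pi.single j 1) + Complex.I * fderiv ℝ f z (Pi.single j Complex.I)) / 2

/-- A real-valued function on `ℂⁿ` viewed as complex-valued. -/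
def cplx {n : ℕ} (u : (Fin n → ℂ) → ℝ) : (Fin n → ℂ) → ℂ := fun z => (u z : ℂ)

/-- The complex Hessian `A = (u_{ij̄}) = (∂_i ∂_{j̄} u)`. -/
def hessA {n : ℕ} (u : (Fin n → ℂ) → ℝ) (z : Fin n → ℂ) : Matrix (Fin n) (Fin n) ℂ :=
  Matrix.of fun i j => wdz (wdzbar (cplx u) j) i z

/-- The matrix `B = (u_{ij}) = (∂_i ∂_j u)`. -/
def hessB {n : ℕ} (u : (Fin n → ℂ) → ℝ) (z : Fin n → ℂ) : Matrix (Fin n) (Fin n) ℂ :=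
  Matrix.of fun i j => wdz (wdz (cplx u) j) i z

/-- `u^{ij̄}`, the entries of the inverse of the complex Hessian, with the convention
`∑_j u^{ij̄} u_{kj̄} = δ_{ik}`. -/
def uInv {n : ℕ} (u : (Fin n → ℂ) → ℝ) (z : Fin n → ℂ) (i j : Fin n) : ℂ :=
  (hessA u z)⁻¹ j i

/-- Entrywise Wirtinger derivative `∂_i` of a matrix-valued function. -/
def mwdz {n : ℕ} (F : (Fin n → ℂ) → Matrix (Fin n) (Fin n) ℂ) (i : Fin n) (z : Fin n → ℂ) :
    Matrix (Fin n) (Fin n) ℂ :=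
  Matrix.of fun p q => wdz (fun w => F w p q) i z

/-- Entrywise Wirtinger derivative `∂_{j̄}` of a matrix-valued function. -/
def mwdzbar {n : ℕ} (F : (Fin n → ℂ) → Matrix (Fin n) (Fin n) ℂ) (j : Fin n) (z : Fin n → ℂ) :
    Matrix (Fin n) (Fin n) ℂ :=
  Matrix.of fun p q => wdzbar (fun w => F w p q) j z

/-- Entrywise complex conjugate of a matrix. -/
def mconj {n : ℕ} (M : Matrix (Fin n) (Fin n) ℂ) : Matrix (Fin n) (Fin n) ℂ :=
  M.map (starRingEnd ℂ)

/-- The real coordinate directions `x_1, …, x_n, y_1, …, y_n` of `ℂⁿ`. -/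
def realDir {n : ℕ} : (Fin n ⊕ Fin n) → (Fin n → ℂ)
  | Sum.inl j => Pi.single j 1
  | Sum.inr j => Pi.single j Complex.I

/-- The real Hessian of `u : ℂⁿ → ℝ` in the coordinates `(x_1,…,x_n,y_1,…,y_n)`. -/
def realHess {n : ℕ} (u : (Fin n → ℂ) → ℝ) (z : Fin n → ℂ) :
    Matrix (Fin n ⊕ Fin n) (Fin n ⊕ Fin n) ℝ :=
  Matrix.of fun a b => fderiv ℝ (fun w => fderiv ℝ u w (realDir b)) z (realDir a)


/-!
Write `det A = exp g` with `g = (n+1) u`. Jacobi's formula gives `tr (A⁻¹ ∂_k A) = ∂_k g`, and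
applying `∂_{l̄}` together with `∂_{l̄}(A⁻¹) = -A⁻¹ (∂_{l̄} A) A⁻¹` gives
`tr (A⁻¹ ∂_{l̄}∂_k A) = tr (A⁻¹ ∂_{l̄}A A⁻¹ ∂_k A) + (n+1) u_{kl̄}`.
All entries involved are derivatives of the single function `u`, and Wirtinger derivatives
commute on smooth functions, so `∂_i∂_{j̄} u_{kl̄} = ∂_{l̄}∂_k u_{ij̄}`, `∂_k u_{ij̄} = ∂_i u_{kj̄}`
and `∂_{l̄} u_{st̄} = ∂_{t̄} u_{sl̄}`; these turn that identity into the `(k, l)` entry of the claim.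
-/
open scoped ContDiff Topology
open Filter Set

section Wirtinger

variable {E : Type*} [NormedAddCommGroup E] [NormedSpace ℂ E]

/-- `wirt c v f z = wirtL c v (fderiv ℝ f z)`: `c = -I`, `c = I` give `∂/∂z`, `∂/∂z̄` along `v`,
and the rules of calculus for `wirt` are those of `fderiv` pushed through this functional. -/
def wirtL (c : ℂ) (v : E) : (E →L[ℝ] ℂ) →L[ℝ] ℂ :=
  (2 : ℂ)⁻¹ • (ContinuousLinearMap.apply ℝ ℂ v + c • ContinuousLinearMap.apply ℝ ℂ (I • v))

theorem wirtL_apply (c : ℂ) (v : E) (L : E →L[ℝ] ℂ) :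
    wirtL c v L = (L v + c * L (I • v)) / 2 := by
  simp only [wirtL, smul_add, _root_.add_apply, _root_.smul_apply,
    ContinuousLinearMap.apply_apply, smul_eq_mul]
  ring

theorem wirtL_smul (c : ℂ) (v : E) (a : ℂ) (L : E →L[ℝ] ℂ) :
    wirtL c v (a • L) = a * wirtL c v L := by
  simp only [wirtL_apply, _root_.smul_apply, smul_eq_mul]; ring

def wirt (c : ℂ) (v : E) (f : E → ℂ) (z : E) : ℂ := wirtL c v (fderiv ℝ f z)

variable {c d : ℂ} {v w : E} {f g : E → ℂ} {z : E}

theorem HasFDerivAt.wirt_eq {L : E →L[ℝ] ℂ} (h : HasFDerivAt f L z) :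
    wirt c v f z = wirtL c v L := by
  rw [wirt, h.fderiv]

theorem wirt_congr (h : f =ᶠ[𝓝 z] g) : wirt c v f z = wirt c v g z := by
  rw [wirt, wirt, h.fderiv_eq]

theorem wirt_const (a : ℂ) : wirt c v (fun _ => a) z = 0 := by
  rw [(hasFDerivAt_const a z).wirt_eq, map_zero]

theorem wirt_const_mul (hf : DifferentiableAt ℝ f z) (a : ℂ) :
    wirt c v (fun y => a * f y) z = a * wirt c v f z := by
  rw [(hf.hasFDerivAt.const_mul a).wirt_eq, wirtL_smul, wirt]

theorem wirt_mul (hf : DifferentiableAt ℝ f z) (hg : DifferentiableAt ℝ g z) :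
    wirt c v (fun y => f y * g y) z = wirt c v f z * g z + f z * wirt c v g z := by
  rw [(hf.hasFDerivAt.fun_mul hg.hasFDerivAt).wirt_eq, map_add, wirtL_smul, wirtL_smul, wirt, wirt]
  ring

theorem wirt_sum {ι : Type*} (s : Finset ι) {F : ι → E → ℂ}
    (hF : ∀ p ∈ s, DifferentiableAt ℝ (F p) z) :
    wirt c v (fun y => ∑ p ∈ s, F p y) z = ∑ p ∈ s, wirt c v (F p) z := by
  rw [(HasFDerivAt.fun_sum fun p hp => (hF p hp).hasFDerivAt).wirt_eq, map_sum]
  rfl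

theorem wirt_cexp (hf : DifferentiableAt ℝ f z) :
    wirt c v (fun y => Complex.exp (f y)) z = Complex.exp (f z) * wirt c v f z := by
  rw [hf.hasFDerivAt.cexp.wirt_eq, wirtL_smul, wirt]

theorem ContDiffOn.wirt {Ω : Set E} (hΩ : IsOpen Ω) (hf : ContDiffOn ℝ ∞ f Ω) :
    ContDiffOn ℝ ∞ (wirt c v f) Ω :=
  (wirtL c v).contDiff.comp_contDiffOn (hf.fderiv_of_isOpen hΩ le_rfl)

theorem wirt_wirt_eq (hf : ContDiffAt ℝ 2 f z) :
    wirt c v (wirt d w f) z = (fderiv ℝ (fderiv ℝ f) z v w + d * fderiv ℝ (fderiv ℝ f) z v (I • w)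
      + c * (fderiv ℝ (fderiv ℝ f) z (I • v) w
        + d * fderiv ℝ (fderiv ℝ f) z (I • v) (I • w))) / 4 := by
  have hf' : DifferentiableAt ℝ (fderiv ℝ f) z :=
    (hf.fderiv_right (m := 1) le_rfl).differentiableAt one_ne_zero
  have h : HasFDerivAt (wirt d w f) ((wirtL d w).comp (fderiv ℝ (fderiv ℝ f) z)) z :=
    (wirtL d w).hasFDerivAt.comp z hf'.hasFDerivAt
  rw [h.wirt_eq, wirtL_apply]
  simp only [ContinuousLinearMap.comp_apply, wirtL_apply]
  ring

theorem wirt_comm (hf : ContDiffAt ℝ 2 f z) :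
    wirt c v (wirt d w f) z = wirt d w (wirt c v f) z := by
  have hsymm := hf.isSymmSndFDerivAt (by simp)
  rw [wirt_wirt_eq hf, wirt_wirt_eq hf, hsymm v w, hsymm v (I • w), hsymm (I • v) w,
    hsymm (I • v) (I • w)]
  ring

variable {Ω : Set E}

theorem Set.EqOn.wirt (hΩ : IsOpen Ω) (h : EqOn f g Ω) : EqOn (wirt c v f) (wirt c v g) Ω :=
  fun _ hz => wirt_congr (Filter.eventuallyEq_of_mem (hΩ.mem_nhds hz) h)

theorem wirt_comm_on (hΩ : IsOpen Ω) (hf : ContDiffOn ℝ ∞ f Ω) :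
    EqOn (wirt c v (wirt d w f)) (wirt d w (wirt c v f)) Ω :=
  fun _ hz => wirt_comm ((hf.contDiffAt (hΩ.mem_nhds hz)).of_le (WithTop.coe_le_coe.mpr le_top))

theorem wirt_rotate_on {c₁ c₂ c₃ : ℂ} {v₁ v₂ v₃ : E} (hΩ : IsOpen Ω) (hf : ContDiffOn ℝ ∞ f Ω) :
    EqOn (wirt c₁ v₁ (wirt c₂ v₂ (wirt c₃ v₃ f))) (wirt c₂ v₂ (wirt c₃ v₃ (wirt c₁ v₁ f))) Ω :=
  (wirt_comm_on hΩ (hf.wirt hΩ)).trans ((wirt_comm_on hΩ hf).wirt hΩ)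

end Wirtinger

section Jacobi

variable {ι : Type*} [Fintype ι] [DecidableEq ι]

theorem Matrix.adjugate_mulVec_apply_eq_sum_perm {R : Type*} [CommRing R] (M : Matrix ι ι R)
    (b : ι → R) (p : ι) :
    (M.adjugate *ᵥ b) p
      = ∑ σ : Equiv.Perm ι,
          (Equiv.Perm.sign σ : R) * ((∏ q ∈ Finset.univ.erase p, M (σ q) q) * b (σ p)) := by
  rw [← cramer_eq_adjugate_mulVec, cramer_apply, det_apply']
  refine Finset.sum_congr rfl fun σ _ => ?_
  rw [← Finset.prod_erase_mul _ _ (Finset.mem_univ p), updateCol_self]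
  congr 2
  exact Finset.prod_congr rfl fun q hq => updateCol_ne (Finset.ne_of_mem_erase hq)

theorem hasFDerivAt_det {𝕜 𝔸 E : Type*} [NontriviallyNormedField 𝕜] [NormedCommRing 𝔸]
    [NormedAlgebra 𝕜 𝔸] [NormedAddCommGroup E] [NormedSpace 𝕜 E] {M : E → Matrix ι ι 𝔸}
    {M' : ι → ι → E →L[𝕜] 𝔸} {z : E} (hM : ∀ p q, HasFDerivAt (fun y => M y p q) (M' p q) z) :
    HasFDerivAt (fun y => (M y).det) (∑ p, ∑ r, (M z).adjugate p r • M' r p) z := by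
  simp_rw [det_apply']
  refine (HasFDerivAt.fun_sum fun σ _ => (HasFDerivAt.finsetProd fun q _ => hM (σ q) q).const_mul
    (Equiv.Perm.sign σ : 𝔸)).congr_fderiv ?_
  ext v
  simp only [FunLike.coe_sum, Finset.sum_apply, _root_.smul_apply, smul_eq_mul,
    Finset.mul_sum]
  rw [Finset.sum_comm]
  refine Finset.sum_congr rfl fun p _ => ?_
  exact ((M z).adjugate_mulVec_apply_eq_sum_perm (fun r => M' r p v) p).symm

end Jacobi

theorem Matrix.trace_mul_mul_mul_mul_eq_sum_of_comm {ι R : Type*} [Fintype ι] [CommRing R]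
    (P : Matrix ι ι R) (X Y : ι → Matrix ι ι R) (hX : ∀ i k j, X k i j = X i k j)
    (hY : ∀ l s t, Y l s t = Y t s l) (k l : ι) :
    (P * Y l * P * X k).trace = ∑ i, ∑ j, P j i * (X i * P * Y j) k l := by
  simp only [trace, diag, Matrix.mul_apply, Finset.sum_mul, Finset.mul_sum]
  rw [Finset.sum_comm]
  refine Finset.sum_congr rfl fun i _ => ?_
  rw [Finset.sum_comm]
  refine Finset.sum_congr rfl fun j _ => ?_
  rw [Finset.sum_comm]
  refine Finset.sum_congr rfl fun s _ => Finset.sum_congr rfl fun t _ => ?_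
  rw [hX i k, hY j s l]
  ring

section MatrixWirtinger

variable {E : Type*} [NormedAddCommGroup E] [NormedSpace ℂ E]
  {ι : Type*}

def mwirt (c : ℂ) (v : E) (M : E → Matrix ι ι ℂ) (z : E) : Matrix ι ι ℂ :=
  of fun p q => wirt c v (fun y => M y p q) z

variable {c d : ℂ} {v w : E} {M N : E → Matrix ι ι ℂ} {z : E}

theorem mwirt_congr (h : M =ᶠ[𝓝 z] N) : mwirt c v M z = mwirt c v N z := by
  ext p q
  exact wirt_congr (h.mono fun y hy => congrFun (congrFun hy p) q)

theorem mwirt_const (C : Matrix ι ι ℂ) : mwirt c v (fun _ => C) z = 0 := by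
  ext p q
  exact wirt_const _

variable [Fintype ι]

theorem mwirt_mul (hM : ∀ p q, DifferentiableAt ℝ (fun y => M y p q) z)
    (hN : ∀ p q, DifferentiableAt ℝ (fun y => N y p q) z) :
    mwirt c v (fun y => M y * N y) z = mwirt c v M z * N z + M z * mwirt c v N z := by
  ext p q
  simp only [mwirt, Matrix.mul_apply, of_apply, Matrix.add_apply]
  rw [wirt_sum (F := fun s y => M y p s * N y s q) _ fun s _ => (hM p s).mul (hN s q),
    ← Finset.sum_add_distrib]
  exact Finset.sum_congr rfl fun s _ => wirt_mul (hM p s) (hN s q)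

theorem differentiableAt_mul_apply (hM : ∀ p q, DifferentiableAt ℝ (fun y => M y p q) z)
    (hN : ∀ p q, DifferentiableAt ℝ (fun y => N y p q) z) (p q : ι) :
    DifferentiableAt ℝ (fun y => (M y * N y) p q) z := by
  simp only [Matrix.mul_apply]
  exact DifferentiableAt.fun_sum fun s _ => (hM p s).mul (hN s q)

theorem wirt_trace (hM : ∀ p q, DifferentiableAt ℝ (fun y => M y p q) z) :
    wirt c v (fun y => (M y).trace) z = (mwirt c v M z).trace := by
  simp only [trace, diag]
  exact wirt_sum _ fun p _ => hM p p

variable [DecidableEq ι]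

theorem differentiableAt_det (hM : ∀ p q, DifferentiableAt ℝ (fun y => M y p q) z) :
    DifferentiableAt ℝ (fun y => (M y).det) z :=
  (hasFDerivAt_det fun p q => (hM p q).hasFDerivAt).differentiableAt

theorem wirt_det (hM : ∀ p q, DifferentiableAt ℝ (fun y => M y p q) z) :
    wirt c v (fun y => (M y).det) z = ((M z).adjugate * mwirt c v M z).trace := by
  rw [(hasFDerivAt_det fun p q => (hM p q).hasFDerivAt).wirt_eq]
  simp only [map_sum, wirtL_smul, trace, diag, mul_apply, mwirt, of_apply, wirt]

theorem differentiableAt_inv_apply (hM : ∀ p q, DifferentiableAt ℝ (fun y => M y p q) z)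
    (hdet : (M z).det ≠ 0) (p q : ι) :
    DifferentiableAt ℝ (fun y => (M y)⁻¹ p q) z := by
  have hadj : DifferentiableAt ℝ (fun y => (M y).adjugate p q) z := by
    simp only [adjugate_apply]
    refine differentiableAt_det fun a b => ?_
    by_cases h : a = q
    · simp only [h, updateRow_self]
      exact differentiableAt_const _
    · simp only [updateRow_ne h]
      exact hM a b
  have hinv : (fun y => (M y)⁻¹ p q) = fun y => ((M y).det)⁻¹ * (M y).adjugate p q := by
    funext y
    rw [Matrix.inv_def, Ring.inverse_eq_inv', Matrix.smul_apply, smul_eq_mul]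
  rw [hinv]
  exact ((differentiableAt_det hM).inv hdet).mul hadj

theorem mwirt_inv (hM : ∀ p q, DifferentiableAt ℝ (fun y => M y p q) z) (hdet : (M z).det ≠ 0) :
    mwirt c v (fun y => (M y)⁻¹) z = -((M z)⁻¹ * mwirt c v M z * (M z)⁻¹) := by
  have hunit : IsUnit (M z).det := isUnit_iff_ne_zero.mpr hdet
  have hinv_mul : (fun y => (M y)⁻¹ * M y) =ᶠ[𝓝 z] fun _ => 1 := by
    filter_upwards [(differentiableAt_det hM).continuousAt.eventually_ne hdet] with y hy
    exact nonsing_inv_mul _ (isUnit_iff_ne_zero.mpr hy)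
  have key : mwirt c v (fun y => (M y)⁻¹) z * M z + (M z)⁻¹ * mwirt c v M z = 0 := by
    rw [← mwirt_mul (differentiableAt_inv_apply hM hdet) hM, mwirt_congr hinv_mul, mwirt_const]
  calc mwirt c v (fun y => (M y)⁻¹) z
      = (mwirt c v (fun y => (M y)⁻¹) z * M z) * (M z)⁻¹ := by
        rw [Matrix.mul_assoc, mul_nonsing_inv _ hunit, Matrix.mul_one]
    _ = -((M z)⁻¹ * mwirt c v M z * (M z)⁻¹) := by
        rw [eq_neg_of_add_eq_zero_left key, Matrix.neg_mul]

theorem wirt_trace_inv_mul (hM : ∀ p q, DifferentiableAt ℝ (fun y => M y p q) z)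
    (hN : ∀ p q, DifferentiableAt ℝ (fun y => N y p q) z) (hdet : (M z).det ≠ 0) :
    wirt c v (fun y => ((M y)⁻¹ * N y).trace) z
      = ((M z)⁻¹ * mwirt c v N z).trace
        - ((M z)⁻¹ * mwirt c v M z * (M z)⁻¹ * N z).trace := by
  have hinv := differentiableAt_inv_apply hM hdet
  rw [wirt_trace (differentiableAt_mul_apply hinv hN), mwirt_mul hinv hN, mwirt_inv hM hdet,
    trace_add, Matrix.neg_mul, trace_neg]
  ring

end MatrixWirtinger

section LogDet

variable {E : Type*} [NormedAddCommGroup E] [NormedSpace ℂ E] {ι : Type*} [Fintype ι]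
  [DecidableEq ι] {c d : ℂ} {v w : E} {M : E → Matrix ι ι ℂ} {g : E → ℂ} {z : E}

theorem trace_inv_mul_mwirt_of_det_eq_exp (hM : ∀ p q, DifferentiableAt ℝ (fun y => M y p q) z)
    (hg : DifferentiableAt ℝ g z) (hdet : ∀ᶠ y in 𝓝 z, (M y).det = Complex.exp (g y)) :
    ((M z)⁻¹ * mwirt c v M z).trace = wirt c v g z := by
  have hexp : (M z).det = Complex.exp (g z) := hdet.self_of_nhds
  have hjacobi := wirt_det (c := c) (v := v) hM
  rw [wirt_congr hdet, wirt_cexp hg] at hjacobi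
  rw [Matrix.inv_def, Ring.inverse_eq_inv', Matrix.smul_mul, trace_smul, smul_eq_mul, ← hjacobi,
    hexp, ← mul_assoc, inv_mul_cancel₀ (Complex.exp_ne_zero _), one_mul]

theorem trace_inv_mul_mwirt_mwirt_of_det_eq_exp {Ω : Set E} (hΩ : IsOpen Ω)
    (hM : ∀ p q, ContDiffOn ℝ ∞ (fun y => M y p q) Ω) (hg : ContDiffOn ℝ ∞ g Ω)
    (hdet : ∀ y ∈ Ω, (M y).det = Complex.exp (g y)) (hz : z ∈ Ω) :
    ((M z)⁻¹ * mwirt c v (mwirt d w M) z).trace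
      = ((M z)⁻¹ * mwirt c v M z * (M z)⁻¹ * mwirt d w M z).trace + wirt c v (wirt d w g) z := by
  have hdiff {f : E → ℂ} (hf : ContDiffOn ℝ ∞ f Ω) {y : E} (hy : y ∈ Ω) :
      DifferentiableAt ℝ f y :=
    (hf.contDiffAt (hΩ.mem_nhds hy)).differentiableAt (by simp)
  have hfirst : EqOn (fun y => ((M y)⁻¹ * mwirt d w M y).trace) (wirt d w g) Ω :=
    fun y hy => trace_inv_mul_mwirt_of_det_eq_exp (fun p q => hdiff (hM p q) hy) (hdiff hg hy)
      (eventually_of_mem (hΩ.mem_nhds hy) hdet)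
  have hsecond := wirt_trace_inv_mul (c := c) (v := v) (N := mwirt d w M)
    (fun p q => hdiff (hM p q) hz) (fun p q => hdiff ((hM p q).wirt (c := d) (v := w) hΩ) hz)
    (by rw [hdet z hz]; exact Complex.exp_ne_zero _)
  rw [hfirst.wirt hΩ hz] at hsecond
  linear_combination -hsecond

end LogDet

section ComplexHessian

variable {n : ℕ}

theorem wdz_eq_wirt (f : (Fin n → ℂ) → ℂ) (i : Fin n) :
    wdz f i = wirt (-I) (Pi.single i 1) f := by
  funext z
  rw [wdz, wirt, wirtL_apply, ← Pi.single_smul, smul_eq_mul, mul_one]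
  ring

theorem wdzbar_eq_wirt (f : (Fin n → ℂ) → ℂ) (i : Fin n) :
    wdzbar f i = wirt I (Pi.single i 1) f := by
  funext z
  rw [wdzbar, wirt, wirtL_apply, ← Pi.single_smul, smul_eq_mul, mul_one]

theorem mwdz_eq_mwirt (F : (Fin n → ℂ) → Matrix (Fin n) (Fin n) ℂ) (i : Fin n) :
    mwdz F i = mwirt (-I) (Pi.single i 1) F := by
  funext z
  ext p q
  simp only [mwdz, mwirt, of_apply, wdz_eq_wirt]

theorem mwdzbar_eq_mwirt (F : (Fin n → ℂ) → Matrix (Fin n) (Fin n) ℂ) (i : Fin n) :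
    mwdzbar F i = mwirt I (Pi.single i 1) F := by
  funext z
  ext p q
  simp only [mwdzbar, mwirt, of_apply, wdzbar_eq_wirt]

theorem hessA_apply_eq_wirt (u : (Fin n → ℂ) → ℝ) (p q : Fin n) :
    (fun z => hessA u z p q) = wirt (-I) (Pi.single p 1) (wirt I (Pi.single q 1) (cplx u)) := by
  funext z
  simp only [hessA, of_apply, wdz_eq_wirt, wdzbar_eq_wirt]

variable {Ω : Set (Fin n → ℂ)} {u : (Fin n → ℂ) → ℝ} {z : Fin n → ℂ}

theorem ContDiffOn.cplx (hu : ContDiffOn ℝ ∞ u Ω) : ContDiffOn ℝ ∞ (cplx u) Ω :=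
  ofRealCLM.contDiff.comp_contDiffOn hu

theorem contDiffOn_hessA_apply (hΩ : IsOpen Ω) (hu : ContDiffOn ℝ ∞ u Ω) (p q : Fin n) :
    ContDiffOn ℝ ∞ (fun z => hessA u z p q) Ω := by
  rw [hessA_apply_eq_wirt]
  exact (hu.cplx.wirt hΩ).wirt hΩ

theorem wirt_wirt_cplx_eqOn_hessA (hΩ : IsOpen Ω) (hu : ContDiffOn ℝ ∞ u Ω) (k l : Fin n) :
    EqOn (wirt I (Pi.single l 1) (wirt (-I) (Pi.single k 1) (cplx u)))
      (fun z => hessA u z k l) Ω := by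
  rw [hessA_apply_eq_wirt]
  exact wirt_comm_on hΩ hu.cplx

theorem mwdz_hessA_comm (hΩ : IsOpen Ω) (hu : ContDiffOn ℝ ∞ u Ω) (hz : z ∈ Ω) (i k j : Fin n) :
    mwdz (hessA u) k z i j = mwdz (hessA u) i z k j := by
  simp only [mwdz_eq_mwirt, mwirt, of_apply, hessA_apply_eq_wirt]
  exact wirt_comm_on hΩ (hu.cplx.wirt hΩ) hz

theorem mwdzbar_hessA_comm (hΩ : IsOpen Ω) (hu : ContDiffOn ℝ ∞ u Ω) (hz : z ∈ Ω)
    (l s t : Fin n) : mwdzbar (hessA u) l z s t = mwdzbar (hessA u) t z s l := by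
  simp only [mwdzbar_eq_mwirt, mwirt, of_apply, hessA_apply_eq_wirt]
  exact (wirt_rotate_on hΩ hu.cplx hz).trans (wirt_comm_on hΩ (hu.cplx.wirt hΩ) hz)

theorem mwdz_mwdzbar_hessA_comm (hΩ : IsOpen Ω) (hu : ContDiffOn ℝ ∞ u Ω) (hz : z ∈ Ω)
    (i j k l : Fin n) :
    mwdz (mwdzbar (hessA u) j) i z k l = mwdzbar (mwdz (hessA u) k) l z i j := by
  simp only [mwdz_eq_mwirt, mwdzbar_eq_mwirt, mwirt, of_apply, hessA_apply_eq_wirt]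
  -- `∂_i∂_j̄∂_k(∂_l̄ u) = ∂_k∂_i∂_j̄(∂_l̄ u) = ∂_k∂_l̄(∂_i∂_j̄ u) = ∂_l̄∂_k(∂_i∂_j̄ u)`
  have hU := hu.cplx
  have hdU := hU.wirt (c := I) (v := Pi.single l 1) hΩ
  refine ((wirt_rotate_on hΩ hdU).trans (wirt_rotate_on hΩ hdU)).trans ?_ hz
  refine (((wirt_rotate_on hΩ hU).trans (wirt_rotate_on hΩ hU)).wirt hΩ).trans ?_
  exact wirt_comm_on hΩ ((hU.wirt hΩ).wirt hΩ)

theorem trace_hessA_inv_mul_mwdzbar_mwdz (hΩ : IsOpen Ω) (hu : ContDiffOn ℝ ∞ u Ω)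
    (hKE : ∀ z ∈ Ω, (hessA u z).det = (Real.exp ((n + 1) * u z) : ℂ)) (hz : z ∈ Ω)
    (k l : Fin n) :
    ((hessA u z)⁻¹ * mwdzbar (mwdz (hessA u) k) l z).trace
      = ((hessA u z)⁻¹ * mwdzbar (hessA u) l z * (hessA u z)⁻¹ * mwdz (hessA u) k z).trace
        + ((n : ℂ) + 1) * hessA u z k l := by
  have hdet : ∀ y ∈ Ω, (hessA u y).det = Complex.exp (((n : ℂ) + 1) * cplx u y) := by
    intro y hy
    rw [hKE y hy, cplx]
    push_cast
    rfl
  have hdiff {f : (Fin n → ℂ) → ℂ} (hf : ContDiffOn ℝ ∞ f Ω) {y} (hy : y ∈ Ω) :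
      DifferentiableAt ℝ f y :=
    (hf.contDiffAt (hΩ.mem_nhds hy)).differentiableAt (by simp)
  have hconst : EqOn (wirt (-I) (Pi.single k 1) fun y => ((n : ℂ) + 1) * cplx u y)
      (fun y => ((n : ℂ) + 1) * wirt (-I) (Pi.single k 1) (cplx u) y) Ω :=
    fun y hy => wirt_const_mul (hdiff hu.cplx hy) _
  rw [mwdz_eq_mwirt, mwdzbar_eq_mwirt, mwdzbar_eq_mwirt,
    trace_inv_mul_mwirt_mwirt_of_det_eq_exp hΩ (contDiffOn_hessA_apply hΩ hu)
      (contDiffOn_const.mul hu.cplx) hdet hz,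
    hconst.wirt hΩ hz, wirt_const_mul (hdiff (hu.cplx.wirt hΩ) hz), wirt_wirt_cplx_eqOn_hessA hΩ hu k l hz]

end ComplexHessian

theorem laplacian_A_eq_AA_general (n : ℕ) (Ω : Set (Fin n → ℂ)) (hΩ : IsOpen Ω)
    (u : (Fin n → ℂ) → ℝ) (hu : ContDiffOn ℝ (⊤ : ℕ∞) u Ω)
    (hKE : ∀ z ∈ Ω, (hessA u z).det = (Real.exp ((n + 1) * u z) : ℂ)) :
    ∀ z ∈ Ω,
      ∑ i, ∑ j, uInv u z i j • mwdz (mwdzbar (hessA u) j) i z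
        = (∑ i, ∑ j, uInv u z i j •
            (mwdz (hessA u) i z * (hessA u z)⁻¹ * mwdzbar (hessA u) j z))
          + ((n : ℂ) + 1) • hessA u z := by
  intro z hz
  ext k l
  simp only [uInv, Matrix.sum_apply, Matrix.smul_apply, Matrix.add_apply, smul_eq_mul]
  calc ∑ i, ∑ j, (hessA u z)⁻¹ j i * mwdz (mwdzbar (hessA u) j) i z k l
      = ∑ i, ∑ j, (hessA u z)⁻¹ j i * mwdzbar (mwdz (hessA u) k) l z i j := by
        simp only [mwdz_mwdzbar_hessA_comm hΩ hu hz]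
    _ = ((hessA u z)⁻¹ * mwdzbar (mwdz (hessA u) k) l z).trace := by
        rw [Finset.sum_comm]
        simp only [trace, diag, Matrix.mul_apply]
    _ = ((hessA u z)⁻¹ * mwdzbar (hessA u) l z * (hessA u z)⁻¹ * mwdz (hessA u) k z).trace
          + ((n : ℂ) + 1) * hessA u z k l :=
        trace_hessA_inv_mul_mwdzbar_mwdz hΩ hu hKE hz k l
    _ = _ := by
        rw [trace_mul_mul_mul_mul_eq_sum_of_comm _ _ _ (mwdz_hessA_comm hΩ hu hz)
          (mwdzbar_hessA_comm hΩ hu hz)]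

theorem laplacian_A_eq_AA (n : ℕ) (Ω : Set (Fin n → ℂ)) (hΩ : IsOpen Ω)
    (u : (Fin n → ℂ) → ℝ) (hu : ContDiffOn ℝ (⊤ : ℕ∞) u Ω)
    (hpsh : ∀ z ∈ Ω, (hessA u z).PosDef)
    (hKE : ∀ z ∈ Ω, (hessA u z).det = (Real.exp ((n + 1) * u z) : ℂ)) :
    ∀ z ∈ Ω,
      ∑ i, ∑ j, uInv u z i j • mwdz (mwdzbar (hessA u) j) i z
        = (∑ i, ∑ j, uInv u z i j •
            (mwdz (hessA u) i z * (hessA u z)⁻¹ * mwdzbar (hessA u) j z))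
          + ((n : ℂ) + 1) • hessA u z :=
  laplacian_A_eq_AA_general n Ω hΩ u hu hKE

end
end

section
/- Let u be a smooth strictly plurisubharmonic function on an open set Ω ⊆ ℂ^n satisfying det(u_{ij̄}) = e^{(n+1)u} on Ω, and let v = e^{-u}. Then at every point of Ω the (n+1)×(n+1) bordered complex Hessian determinant of v equals (−1)^n: det [[v, v_{j̄}],[v_i, v_{ij̄}]] = (−1)^n, where the matrix has (0,0)-entry v, first row (v_{1̄},…,v_{n̄}), first column (v_1,…,v_n)ᵀ, and lower-right n×n block (v_{ij̄}). -/
/-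
With `v = e^{-u}` the chain rule gives `v_i = -v u_i`, `v_{j̄} = -v u_{j̄}` and
`v_{ij̄} = v (u_i u_{j̄} - u_{ij̄})`, so the bordered Hessian of `v` is `v` times the matrix
`[[1, -u_{j̄}], [-u_i, u_i u_{j̄} - u_{ij̄}]]`. Its Schur complement with respect to the corner `1`
is `-(u_{ij̄})`, hence the determinant is `v^{n+1} (-1)^n det (u_{ij̄}) = (-1)^n` by the
Kähler–Einstein equation `det (u_{ij̄}) = e^{(n+1)u}`.
-/

open Complex Matrix
open scoped ComplexOrder

noncomputable section

/-- The bordered complex Hessian matrix of a real-valued function `v` on `ℂⁿ`. -/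
def bordered {n : ℕ} (v : (Fin n → ℂ) → ℝ) (z : Fin n → ℂ) :
    Matrix (Option (Fin n)) (Option (Fin n)) ℂ :=
  Matrix.of fun i j =>
    match i, j with
    | none, none => cplx v z
    | none, some q => wdzbar (cplx v) q z
    | some p, none => wdz (cplx v) p z
    | some p, some q => wdz (wdzbar (cplx v) q) p z

open Topology

section Wirtinger

variable {n : ℕ}

lemma fderiv_cplx_apply {u : (Fin n → ℂ) → ℝ} {z : Fin n → ℂ} (hu : DifferentiableAt ℝ u z)
    (ξ : Fin n → ℂ) : fderiv ℝ (cplx u) z ξ = fderiv ℝ u z ξ :=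
  congrArg (· ξ) (ofRealCLM.hasFDerivAt.comp z hu.hasFDerivAt).fderiv

lemma fderiv_comp_apply_of_hasDerivAt {g : ℝ → ℝ} {g' : ℝ} {u : (Fin n → ℂ) → ℝ}
    {z : Fin n → ℂ} (hg : HasDerivAt g g' (u z)) (hu : DifferentiableAt ℝ u z) (ξ : Fin n → ℂ) :
    fderiv ℝ (fun w => g (u w)) z ξ = g' * fderiv ℝ u z ξ :=
  congrArg (· ξ) (hg.comp_hasFDerivAt z hu.hasFDerivAt).fderiv

lemma wdz_cplx_comp {g : ℝ → ℝ} {g' : ℝ} {u : (Fin n → ℂ) → ℝ} {z : Fin n → ℂ}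
    (hg : HasDerivAt g g' (u z)) (hu : DifferentiableAt ℝ u z) (j : Fin n) :
    wdz (cplx fun w => g (u w)) j z = g' * wdz (cplx u) j z := by
  have hgu : DifferentiableAt ℝ (fun w => g (u w)) z :=
    (hg.comp_hasFDerivAt z hu.hasFDerivAt).differentiableAt
  simp only [wdz, fderiv_cplx_apply hgu, fderiv_cplx_apply hu,
    fderiv_comp_apply_of_hasDerivAt hg hu]
  push_cast
  ring

lemma wdzbar_cplx_comp {g : ℝ → ℝ} {g' : ℝ} {u : (Fin n → ℂ) → ℝ} {z : Fin n → ℂ}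
    (hg : HasDerivAt g g' (u z)) (hu : DifferentiableAt ℝ u z) (j : Fin n) :
    wdzbar (cplx fun w => g (u w)) j z = g' * wdzbar (cplx u) j z := by
  have hgu : DifferentiableAt ℝ (fun w => g (u w)) z :=
    (hg.comp_hasFDerivAt z hu.hasFDerivAt).differentiableAt
  simp only [wdzbar, fderiv_cplx_apply hgu, fderiv_cplx_apply hu,
    fderiv_comp_apply_of_hasDerivAt hg hu]
  push_cast
  ring

lemma wdz_mul {f g : (Fin n → ℂ) → ℂ} {z : Fin n → ℂ} (hf : DifferentiableAt ℝ f z)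
    (hg : DifferentiableAt ℝ g z) (j : Fin n) :
    wdz (fun w => f w * g w) j z = f z * wdz g j z + g z * wdz f j z := by
  simp only [wdz, fderiv_fun_mul hf hg, _root_.add_apply, _root_.smul_apply, smul_eq_mul]
  ring

lemma wdz_congr_of_eventuallyEq {f g : (Fin n → ℂ) → ℂ} {z : Fin n → ℂ} (h : f =ᶠ[𝓝 z] g)
    (j : Fin n) : wdz f j z = wdz g j z := by
  simp only [wdz, h.fderiv_eq]

lemma differentiableAt_wdzbar {f : (Fin n → ℂ) → ℂ} {z : Fin n → ℂ} (hf : ContDiffAt ℝ 2 f z)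
    (j : Fin n) : DifferentiableAt ℝ (wdzbar f j) z := by
  have hdf : DifferentiableAt ℝ (fderiv ℝ f) z :=
    (hf.fderiv_right le_rfl).differentiableAt one_ne_zero
  unfold wdzbar
  fun_prop

lemma wdz_wdzbar_cplx_comp {g g' : ℝ → ℝ} {g'' : ℝ} {u : (Fin n → ℂ) → ℝ} {z : Fin n → ℂ}
    (hg : ∀ x, HasDerivAt g (g' x) x) (hg' : HasDerivAt g' g'' (u z)) (hu : ContDiffAt ℝ 2 u z)
    (i j : Fin n) :
    wdz (wdzbar (cplx fun w => g (u w)) j) i z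
      = g'' * wdz (cplx u) i z * wdzbar (cplx u) j z + g' (u z) * hessA u z i j := by
  have hdiff : ∀ᶠ w in 𝓝 z, DifferentiableAt ℝ u w :=
    (hu.eventually (by simp)).mono fun w hw => hw.differentiableAt two_ne_zero
  have hfirst : wdzbar (cplx fun w => g (u w)) j =ᶠ[𝓝 z]
      fun w => cplx (fun w => g' (u w)) w * wdzbar (cplx u) j w :=
    hdiff.mono fun w hw => wdzbar_cplx_comp (hg (u w)) hw j
  have hg'u : DifferentiableAt ℝ (cplx fun w => g' (u w)) z :=
    ofRealCLM.differentiableAt.comp z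
      (hg'.comp_hasFDerivAt z (hu.differentiableAt two_ne_zero).hasFDerivAt).differentiableAt
  have hu' : ContDiffAt ℝ 2 (cplx u) z := ofRealCLM.contDiff.contDiffAt.comp z hu
  rw [wdz_congr_of_eventuallyEq hfirst, wdz_mul hg'u (differentiableAt_wdzbar hu' j),
    wdz_cplx_comp hg' (hu.differentiableAt two_ne_zero)]
  simp only [hessA, cplx, of_apply]
  ring

end Wirtinger

section BorderMatrix

variable {ι R : Type*} [Fintype ι] [DecidableEq ι] [CommRing R]

def borderMatrix (c : R) (r col : ι → R) (M : Matrix ι ι R) : Matrix (Option ι) (Option ι) R :=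
  Matrix.of fun i j =>
    match i, j with
    | none, none => c
    | none, some q => r q
    | some p, none => col p
    | some p, some q => M p q

lemma det_borderMatrix_one (r col : ι → R) (M : Matrix ι ι R) :
    (borderMatrix 1 r col M).det = (M - vecMulVec col r).det := by
  let e : ι ⊕ Unit ≃ Option ι := (Equiv.optionEquivSumPUnit ι).symm
  have hblocks : (borderMatrix 1 r col M).submatrix e e
      = fromBlocks M (replicateCol Unit col) (replicateRow Unit r) 1 := by
    ext (i | i) (j | j) <;> rfl
  rw [← det_submatrix_equiv_self e, hblocks, det_fromBlocks_one₂₂, ← vecMulVec_eq]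

end BorderMatrix

lemma bordered_eq_borderMatrix {n : ℕ} (v : (Fin n → ℂ) → ℝ) (z : Fin n → ℂ) :
    bordered v z = borderMatrix (cplx v z) (fun q => wdzbar (cplx v) q z)
      (fun p => wdz (cplx v) p z) (hessA v z) := by
  ext (i | i) (j | j) <;> rfl

lemma bordered_exp_neg_eq_smul_borderMatrix {n : ℕ} {u : (Fin n → ℂ) → ℝ} {z : Fin n → ℂ}
    (hu : ContDiffAt ℝ 2 u z) :
    bordered (fun w => Real.exp (-u w)) z = (Real.exp (-u z) : ℂ) •
      borderMatrix 1 (-fun q => wdzbar (cplx u) q z) (-fun p => wdz (cplx u) p z)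
        (vecMulVec (fun p => wdz (cplx u) p z) (fun q => wdzbar (cplx u) q z) - hessA u z) := by
  have hu1 : DifferentiableAt ℝ u z := hu.differentiableAt two_ne_zero
  have hg (x : ℝ) : HasDerivAt (fun x => Real.exp (-x)) (-Real.exp (-x)) x :=
    (hasDerivAt_neg x).exp.congr_deriv (mul_neg_one _)
  have hg' : HasDerivAt (fun x => -Real.exp (-x)) (Real.exp (-u z)) (u z) :=
    (hg (u z)).fun_neg.congr_deriv (neg_neg _)
  have hwdz := wdz_cplx_comp (hg (u z)) hu1
  have hwdzbar := wdzbar_cplx_comp (hg (u z)) hu1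
  have hhess := wdz_wdzbar_cplx_comp hg hg' hu
  beta_reduce at hwdz hwdzbar hhess
  rw [bordered_eq_borderMatrix]
  ext (i | i) (j | j)
  · simp [borderMatrix, cplx]
  · simp [borderMatrix, hwdzbar]
  · simp [borderMatrix, hwdz]
  · simp only [borderMatrix, hessA, hhess, of_apply, Pi.neg_apply, Matrix.sub_apply,
      vecMulVec_apply, Matrix.smul_apply, smul_eq_mul, ofReal_neg]
    ring

lemma det_bordered_exp_neg {n : ℕ} {u : (Fin n → ℂ) → ℝ} {z : Fin n → ℂ}
    (hu : ContDiffAt ℝ 2 u z) :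
    (bordered (fun w => Real.exp (-u w)) z).det
      = (Real.exp (-u z) : ℂ) ^ (n + 1) * ((-1) ^ n * (hessA u z).det) := by
  rw [bordered_exp_neg_eq_smul_borderMatrix hu, det_smul, det_borderMatrix_one,
    Fintype.card_option, Fintype.card_fin, vecMulVec_neg, neg_vecMulVec, neg_neg,
    sub_sub_cancel_left, det_neg, Fintype.card_fin]

theorem bordered_hessian_det_of_KE_general (n : ℕ) (Ω : Set (Fin n → ℂ)) (hΩ : IsOpen Ω)
    (u : (Fin n → ℂ) → ℝ) (hu : ContDiffOn ℝ (⊤ : ℕ∞) u Ω)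
    (hKE : ∀ z ∈ Ω, (hessA u z).det = (Real.exp ((n + 1) * u z) : ℂ)) :
    ∀ z ∈ Ω, (bordered (fun w => Real.exp (-u w)) z).det = (-1 : ℂ) ^ n := by
  intro z hz
  have hu2 : ContDiffAt ℝ 2 u z :=
    (hu.contDiffAt (hΩ.mem_nhds hz)).of_le (WithTop.coe_le_coe.mpr le_top)
  have hexp : Real.exp (-u z) ^ (n + 1) * Real.exp ((n + 1) * u z) = 1 := by
    rw [← Real.exp_nat_mul, ← Real.exp_add]
    push_cast
    ring_nf
    exact Real.exp_zero
  rw [det_bordered_exp_neg hu2, hKE z hz]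
  linear_combination (norm := (push_cast; ring)) (-1 : ℂ) ^ n * congrArg ofReal hexp

theorem bordered_hessian_det_of_KE (n : ℕ) (Ω : Set (Fin n → ℂ)) (hΩ : IsOpen Ω)
    (u : (Fin n → ℂ) → ℝ) (hu : ContDiffOn ℝ (⊤ : ℕ∞) u Ω)
    (hpsh : ∀ z ∈ Ω, (hessA u z).PosDef)
    (hKE : ∀ z ∈ Ω, (hessA u z).det = (Real.exp ((n + 1) * u z) : ℂ)) :
    ∀ z ∈ Ω, (bordered (fun w => Real.exp (-u w)) z).det = (-1 : ℂ) ^ n :=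
  bordered_hessian_det_of_KE_general n Ω hΩ u hu hKE
end
end
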